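/- arXiv:2410.07602 — 3 statements merged into one kernel-verified Lean document; each statement's English description precedes it below -/
import Mathlib

section
/- In the symmetric centroid path decomposition of a finite DAG, every vertex is the tail of at most one heavy edge and the head of at most one heavy edge; consequently, the edge-induced subgraph formed by the heavy edges is a disjoint union of simple directed paths. -/
open scoped Classical

/-- A directed path from `u` to `v` in the graph with edge relation `E`,
represented as the (nonempty) list of visited vertices. -/
def IsDagPath {V : Type*} (E : V → V → Prop) (u v : V) (l : List V) : Prop :=
  l.Chain' E ∧ l.head? = some u ∧ l.getLast? = some v

/-- `π(u,v)`: the number of directed paths from `u` to `v`. -/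
noncomputable def pathCount {V : Type*} (E : V → V → Prop) (u v : V) : ℕ :=
  {l : List V | IsDagPath E u v l}.ncard

/-- `π(u,W)`: the number of directed paths from `u` to a vertex of `W`. -/
noncomputable def pathCountTo {V : Type*} (E : V → V → Prop) (u : V) (W : Finset V) : ℕ :=
  ∑ w ∈ W, pathCount E u w

/-- `λ(v) = (⌊log₂ π(r,v)⌋, ⌊log₂ π(v,W)⌋)`. -/
noncomputable def lamSym {V : Type*} (E : V → V → Prop) (r : V) (W : Finset V) (v : V) :
    ℕ × ℕ :=
  (Nat.log 2 (pathCount E r v), Nat.log 2 (pathCountTo E v W))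

/-- An edge `(u,v)` is heavy if `λ(u) = λ(v)`. -/
def HeavyEdge {V : Type*} (E : V → V → Prop) (r : V) (W : Finset V) (u v : V) : Prop :=
  E u v ∧ lamSym E r W u = lamSym E r W v

/-- An edge `(u,v)` is light if it is not heavy. -/
def LightEdge {V : Type*} (E : V → V → Prop) (r : V) (W : Finset V) (u v : V) : Prop :=
  E u v ∧ lamSym E r W u ≠ lamSym E r W v

/-- The number of light edges occurring along a path given as a list of vertices. -/
noncomputable def lightEdgeCount {V : Type*} (E : V → V → Prop) (r : V) (W : Finset V)
    (l : List V) : ℕ :=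
  (l.zip l.tail).countP fun p => decide (LightEdge E r W p.1 p.2)

/-!
Two distinct out-neighbours `v₁ ≠ v₂` of `u` have disjoint sets of paths to `W`, and prepending `u`
embeds both into the paths from `u`; so `π(v₁,W) + π(v₂,W) ≤ π(u,W)`. If both `v₁` and `v₂` had
`⌊log₂ π(·,W)⌋ = k`, the left side would be at least `2^(k+1)`, forcing `⌊log₂ π(u,W)⌋ > k`;
hence at most one of the edges `(u, vᵢ)` is heavy. Dually, appending `v` embeds the paths from `r`
to two distinct in-neighbours of `v` into those to `v`. Positivity of the path counts, needed for
`2^⌊log₂ n⌋ ≤ n`, comes from every vertex lying on an `r`–`W` path.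
-/

section

variable {V : Type*} {E : V → V → Prop}

lemma IsDagPath.nodup (hacyc : ∀ v : V, ¬ Relation.TransGen E v v) {u v : V} {l : List V}
    (h : IsDagPath E u v l) : l.Nodup :=
  ((h.1.imp fun _ _ => Relation.TransGen.single).pairwise).imp fun hab => by
    rintro rfl; exact hacyc _ hab

lemma finite_setOf_isDagPath [Finite V] (hacyc : ∀ v : V, ¬ Relation.TransGen E v v)
    (u v : V) : {l : List V | IsDagPath E u v l}.Finite := by
  have := Fintype.ofFinite V
  exact (List.finite_length_le V (Fintype.card V)).subset fun _ hl =>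
    (hl.nodup hacyc).length_le_card

lemma IsDagPath.cons {u v w : V} {l : List V} (h : IsDagPath E v w l) (e : E u v) :
    IsDagPath E u w (u :: l) := by
  obtain ⟨hc, hh, hlast⟩ := h
  cases l with
  | nil => simp at hh
  | cons x l =>
    cases hh
    exact ⟨hc.cons_cons e, rfl, by rwa [List.getLast?_cons_cons]⟩

lemma IsDagPath.concat {u v w : V} {l : List V} (h : IsDagPath E u v l) (e : E v w) :
    IsDagPath E u w (l ++ [w]) := by
  obtain ⟨hc, hh, hlast⟩ := h
  have hne : l ≠ [] := by rintro rfl; simp at hh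
  refine ⟨hc.append (.singleton w) ?_, by rwa [List.head?_append_of_ne_nil _ hne], by simp⟩
  intro x hx y hy
  cases hlast.symm.trans hx
  cases hy
  exact e

lemma exists_isDagPath_of_reflTransGen {u v : V} (h : Relation.ReflTransGen E u v) :
    ∃ l, IsDagPath E u v l := by
  obtain ⟨l, hne, hc, hh, hlast⟩ := List.exists_isChain_ne_nil_of_relationReflTransGen h
  exact ⟨l, hc, by rw [List.head?_eq_some_head hne, hh],
    by rw [List.getLast?_eq_some_getLast hne, hlast]⟩

lemma pathCount_pos_of_reflTransGen [Finite V] (hacyc : ∀ v : V, ¬ Relation.TransGen E v v)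
    {u v : V} (h : Relation.ReflTransGen E u v) : 0 < pathCount E u v :=
  (Set.ncard_pos (finite_setOf_isDagPath hacyc u v)).2 (exists_isDagPath_of_reflTransGen h)

lemma pathCountTo_pos [Finite V] (hacyc : ∀ v : V, ¬ Relation.TransGen E v v)
    {v : V} {W : Finset V} (h : ∃ w ∈ W, Relation.ReflTransGen E v w) :
    0 < pathCountTo E v W := by
  obtain ⟨w, hw, hvw⟩ := h
  exact Finset.sum_pos' (fun _ _ => Nat.zero_le _) ⟨w, hw, pathCount_pos_of_reflTransGen hacyc hvw⟩

lemma pathCount_add_pathCount_le_of_common_pred [Finite V]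
    (hacyc : ∀ v : V, ¬ Relation.TransGen E v v) {u v₁ v₂ : V} (hne : v₁ ≠ v₂)
    (e₁ : E u v₁) (e₂ : E u v₂) (w : V) :
    pathCount E v₁ w + pathCount E v₂ w ≤ pathCount E u w := by
  have hdisj : Disjoint {l | IsDagPath E v₁ w l} {l | IsDagPath E v₂ w l} :=
    Set.disjoint_left.2 fun _ h₁ h₂ => hne (Option.some_injective _ (h₁.2.1.symm.trans h₂.2.1))
  rw [pathCount, pathCount, ← Set.ncard_union_eq hdisj (finite_setOf_isDagPath hacyc _ _)
    (finite_setOf_isDagPath hacyc _ _)]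
  refine Set.ncard_le_ncard_of_injOn (List.cons u) ?_ List.cons_injective.injOn
    (finite_setOf_isDagPath hacyc _ _)
  rintro l (hl | hl)
  exacts [hl.cons e₁, hl.cons e₂]

lemma pathCount_add_pathCount_le_of_common_succ [Finite V]
    (hacyc : ∀ v : V, ¬ Relation.TransGen E v v) {u₁ u₂ v : V} (hne : u₁ ≠ u₂)
    (e₁ : E u₁ v) (e₂ : E u₂ v) (r : V) :
    pathCount E r u₁ + pathCount E r u₂ ≤ pathCount E r v := by
  have hdisj : Disjoint {l | IsDagPath E r u₁ l} {l | IsDagPath E r u₂ l} :=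
    Set.disjoint_left.2 fun _ h₁ h₂ => hne (Option.some_injective _ (h₁.2.2.symm.trans h₂.2.2))
  rw [pathCount, pathCount, ← Set.ncard_union_eq hdisj (finite_setOf_isDagPath hacyc _ _)
    (finite_setOf_isDagPath hacyc _ _)]
  refine Set.ncard_le_ncard_of_injOn (· ++ [v]) ?_ (List.append_left_injective _).injOn
    (finite_setOf_isDagPath hacyc _ _)
  rintro l (hl | hl)
  exacts [hl.concat e₁, hl.concat e₂]

lemma pathCountTo_add_pathCountTo_le_of_common_pred [Finite V]
    (hacyc : ∀ v : V, ¬ Relation.TransGen E v v) {u v₁ v₂ : V} (hne : v₁ ≠ v₂)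
    (e₁ : E u v₁) (e₂ : E u v₂) (W : Finset V) :
    pathCountTo E v₁ W + pathCountTo E v₂ W ≤ pathCountTo E u W := by
  simp only [pathCountTo, ← Finset.sum_add_distrib]
  exact Finset.sum_le_sum fun w _ => pathCount_add_pathCount_le_of_common_pred hacyc hne e₁ e₂ w

lemma Nat.log_two_lt_of_add_le {a b c : ℕ} (ha : a ≠ 0) (hb : b ≠ 0)
    (hab : Nat.log 2 a = Nat.log 2 b) (h : a + b ≤ c) : Nat.log 2 a < Nat.log 2 c := by
  refine Nat.le_log_of_pow_le one_lt_two ?_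
  have := Nat.pow_log_le_self 2 ha
  have := hab ▸ Nat.pow_log_le_self 2 hb
  rw [pow_succ]
  omega

end

theorem symCPD_heavy_edges_form_disjoint_paths_general
    {V : Type*} [Fintype V] (E : V → V → Prop) (r : V) (W : Finset V)
    (hacyc : ∀ v : V, ¬ Relation.TransGen E v v)
    (hcov : ∀ v : V, Relation.ReflTransGen E r v ∧ ∃ w ∈ W, Relation.ReflTransGen E v w) :
    (∀ u v₁ v₂ : V, HeavyEdge E r W u v₁ → HeavyEdge E r W u v₂ → v₁ = v₂) ∧
    (∀ u₁ u₂ v : V, HeavyEdge E r W u₁ v → HeavyEdge E r W u₂ v → u₁ = u₂) := by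
  refine ⟨fun u v₁ v₂ ⟨e₁, hlam₁⟩ ⟨e₂, hlam₂⟩ => ?_, fun u₁ u₂ v ⟨e₁, hlam₁⟩ ⟨e₂, hlam₂⟩ => ?_⟩ <;>
    by_contra hne
  · have hlog₁ := congrArg Prod.snd hlam₁
    have hlog₂ := congrArg Prod.snd hlam₂
    have := Nat.log_two_lt_of_add_le (pathCountTo_pos hacyc (hcov v₁).2).ne'
      (pathCountTo_pos hacyc (hcov v₂).2).ne' (hlog₁.symm.trans hlog₂)
      (pathCountTo_add_pathCountTo_le_of_common_pred hacyc hne e₁ e₂ W)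
    simp only [lamSym] at hlog₁ hlog₂
    omega
  · have hlog₁ := congrArg Prod.fst hlam₁
    have hlog₂ := congrArg Prod.fst hlam₂
    have := Nat.log_two_lt_of_add_le (pathCount_pos_of_reflTransGen hacyc (hcov u₁).1).ne'
      (pathCount_pos_of_reflTransGen hacyc (hcov u₂).1).ne' (hlog₁.trans hlog₂.symm)
      (pathCount_add_pathCount_le_of_common_succ hacyc hne e₁ e₂ r)
    simp only [lamSym] at hlog₁ hlog₂
    omega

/-- in the SymCPD of a finite DAG, every vertex is the tail of at most
one heavy edge and the head of at most one heavy edge; hence the heavy edges form a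
disjoint union of simple directed paths. -/
theorem symCPD_heavy_edges_form_disjoint_paths
    {V : Type*} [Fintype V] (E : V → V → Prop) (r : V) (W : Finset V)
    (hacyc : ∀ v : V, ¬ Relation.TransGen E v v)
    (hr_src : ∀ u : V, ¬ E u r)
    (hr_uniq : ∀ v : V, (∀ u : V, ¬ E u v) → v = r)
    (hW : ∀ v : V, v ∈ W ↔ ∀ u : V, ¬ E v u)
    (hcov : ∀ v : V, Relation.ReflTransGen E r v ∧ ∃ w ∈ W, Relation.ReflTransGen E v w) :
    (∀ u v₁ v₂ : V, HeavyEdge E r W u v₁ → HeavyEdge E r W u v₂ → v₁ = v₂) ∧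
    (∀ u₁ u₂ v : V, HeavyEdge E r W u₁ v → HeavyEdge E r W u₂ v → u₁ = u₂) :=
  symCPD_heavy_edges_form_disjoint_paths_general E r W hacyc hcov
end

section
/- In the symmetric centroid path decomposition of a finite DAG with unique source r and sink set W, the number of light edges is at most (Σ_{v : deg⁺(v) ≥ 2} deg⁺(v)) + (Σ_{v : deg⁻(v) ≥ 2} deg⁻(v)), where deg⁺(v) and deg⁻(v) denote the out-degree and in-degree of v; that is, every light edge is counted by a tail of out-degree at least 2 or a head of in-degree at least 2. -/
open scoped Classical

/-!
If the tail `u` of an edge `(u, v)` has no other successor and its head `v` no other predecessor,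
then prepending `u` is a bijection from the paths `v ⇝ w` onto the paths `u ⇝ w` (for `w ≠ u`,
so for every sink), and appending `v` one from the paths `r ⇝ u` onto the paths `r ⇝ v`; the
second bijection is the first one in the reversed graph. Hence `λ(u) = λ(v)`, and every light
edge is counted by its tail or by its head on the right-hand side.
-/

section PathCount

variable {V : Type*} (E : V → V → Prop)

theorem isDagPath_reverse {u v : V} {l : List V} :
    IsDagPath E u v l.reverse ↔ IsDagPath (flip E) v u l := by
  simp only [IsDagPath, List.Chain', List.isChain_reverse, List.head?_reverse,
    List.getLast?_reverse]
  tauto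

theorem pathCount_flip (u v : V) : pathCount (flip E) v u = pathCount E u v := by
  have hrev : {l | IsDagPath (flip E) v u l} = List.reverse ⁻¹' {l | IsDagPath E u v l} :=
    Set.ext fun _ => (isDagPath_reverse E).symm
  rw [pathCount, hrev, Set.ncard_preimage_of_injective_subset_range List.reverse_injective
    (by simp [List.reverse_surjective.range_eq]), pathCount]

theorem pathCount_eq_of_unique_succ {u v w : V} (he : E u v) (hout : ∀ x, E u x → x = v)
    (hw : w ≠ u) : pathCount E u w = pathCount E v w := by
  have hcons : {l | IsDagPath E u w l} = List.cons u '' {l | IsDagPath E v w l} := by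
    ext l
    rcases l with _ | ⟨a, _ | ⟨b, t⟩⟩ <;>
      simp only [IsDagPath, List.Chain', List.isChain_cons_cons, Set.mem_ofPred_eq,
        Set.mem_image, List.getLast?_singleton] <;>
      grind
  rw [pathCount, hcons, Set.ncard_image_of_injective _ List.cons_injective, pathCount]

theorem pathCount_eq_of_unique_pred {r u v : V} (he : E u v) (hin : ∀ x, E x v → x = u)
    (hr : r ≠ v) : pathCount E r v = pathCount E r u := by
  rw [← pathCount_flip E r v, ← pathCount_flip E r u]
  exact pathCount_eq_of_unique_succ (flip E) he hin hr

end PathCount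

theorem lamSym_eq_of_unique_succ_of_unique_pred {V : Type*} {E : V → V → Prop} {r u v : V}
    {W : Finset V} (hrv : r ≠ v) (huW : u ∉ W) (he : E u v) (hout : ∀ x, E u x → x = v)
    (hin : ∀ x, E x v → x = u) : lamSym E r W u = lamSym E r W v := by
  have hsource : pathCount E r v = pathCount E r u := pathCount_eq_of_unique_pred E he hin hrv
  have hsinks : pathCountTo E u W = pathCountTo E v W :=
    Finset.sum_congr rfl fun w hw =>
      pathCount_eq_of_unique_succ E he hout (ne_of_mem_of_not_mem hw huW)
  simp only [lamSym, hsource, hsinks]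

theorem LightEdge.two_le_card_succ_or_pred {V : Type*} [Fintype V] {E : V → V → Prop}
    {r u v : V} {W : Finset V} (hr : ∀ x, ¬ E x r) (hW : ∀ w ∈ W, ∀ x, ¬ E w x)
    (h : LightEdge E r W u v) :
    2 ≤ (Finset.univ.filter (E u)).card ∨ 2 ≤ (Finset.univ.filter (E · v)).card := by
  obtain ⟨he, hne⟩ := h
  by_contra! hdeg
  have hout : ∀ x, E u x → x = v := fun x hx =>
    Finset.card_le_one.mp (Nat.le_of_lt_succ hdeg.1) x (by simpa using hx) v (by simpa using he)
  have hin : ∀ x, E x v → x = u := fun x hx =>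
    Finset.card_le_one.mp (Nat.le_of_lt_succ hdeg.2) x (by simpa using hx) u (by simpa using he)
  exact hne (lamSym_eq_of_unique_succ_of_unique_pred (fun h => hr u (h ▸ he))
    (fun hu => hW u hu v he) he hout hin)

section EdgeCount

variable {V : Type*} [Fintype V] (R : V → V → Prop) [DecidableRel R]
  (P : V → Prop) [DecidablePred P]

theorem card_filter_rel_fst_eq_sum :
    (Finset.univ.filter fun p : V × V => R p.1 p.2 ∧ P p.1).card =
      ∑ v ∈ Finset.univ.filter P, (Finset.univ.filter (R v)).card := by
  rw [Finset.card_filter, Fintype.sum_prod_type, Finset.sum_filter]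
  refine Finset.sum_congr rfl fun v _ => ?_
  by_cases hv : P v <;> simp [hv, Finset.card_filter, -Finset.sum_boole]

theorem card_filter_rel_snd_eq_sum :
    (Finset.univ.filter fun p : V × V => R p.1 p.2 ∧ P p.2).card =
      ∑ v ∈ Finset.univ.filter P, (Finset.univ.filter (R · v)).card := by
  rw [Finset.card_filter, Fintype.sum_prod_type_right, Finset.sum_filter]
  refine Finset.sum_congr rfl fun v _ => ?_
  by_cases hv : P v <;> simp [hv, Finset.card_filter, -Finset.sum_boole]

end EdgeCount

theorem symCPD_light_edge_count_le_general
    {V : Type*} [Fintype V] (E : V → V → Prop) (r : V) (W : Finset V)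
    (hr_src : ∀ u : V, ¬ E u r)
    (hW : ∀ v : V, v ∈ W ↔ ∀ u : V, ¬ E v u) :
    ((Finset.univ : Finset (V × V)).filter (fun p => LightEdge E r W p.1 p.2)).card ≤
      (∑ v ∈ Finset.univ.filter
          (fun v : V => 2 ≤ (Finset.univ.filter (fun w => E v w)).card),
        (Finset.univ.filter (fun w => E v w)).card) +
      (∑ v ∈ Finset.univ.filter
          (fun v : V => 2 ≤ (Finset.univ.filter (fun w => E w v)).card),
        (Finset.univ.filter (fun w => E w v)).card) := by
  rw [← card_filter_rel_fst_eq_sum, ← card_filter_rel_snd_eq_sum]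
  refine (Finset.card_le_card fun p hp => ?_).trans (Finset.card_union_le _ _)
  have hlight : LightEdge E r W p.1 p.2 := (Finset.mem_filter.mp hp).2
  have hdeg := hlight.two_le_card_succ_or_pred hr_src fun w hw => (hW w).1 hw
  simpa [Finset.mem_union, hlight.1] using hdeg

/-- the number of light edges is at most
`(Σ_{v : deg⁺(v) ≥ 2} deg⁺(v)) + (Σ_{v : deg⁻(v) ≥ 2} deg⁻(v))`. -/
theorem symCPD_light_edge_count_le
    {V : Type*} [Fintype V] (E : V → V → Prop) (r : V) (W : Finset V)
    (hacyc : ∀ v : V, ¬ Relation.TransGen E v v)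
    (hr_src : ∀ u : V, ¬ E u r)
    (hr_uniq : ∀ v : V, (∀ u : V, ¬ E u v) → v = r)
    (hW : ∀ v : V, v ∈ W ↔ ∀ u : V, ¬ E v u)
    (hcov : ∀ v : V, Relation.ReflTransGen E r v ∧ ∃ w ∈ W, Relation.ReflTransGen E v w) :
    ((Finset.univ : Finset (V × V)).filter (fun p => LightEdge E r W p.1 p.2)).card ≤
      (∑ v ∈ Finset.univ.filter
          (fun v : V => 2 ≤ (Finset.univ.filter (fun w => E v w)).card),
        (Finset.univ.filter (fun w => E v w)).card) +
      (∑ v ∈ Finset.univ.filter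
          (fun v : V => 2 ≤ (Finset.univ.filter (fun w => E w v)).card),
        (Finset.univ.filter (fun w => E w v)).card) :=
  symCPD_light_edge_count_le_general E r W hr_src hW
end

section
/- In the symmetric centroid path decomposition of a finite DAG with unique source r and sink set W, every directed path from r to a vertex of W consists of at most 1 + 2·⌊log₂ π(r,W)⌋ maximal runs of consecutive heavy edges, where a maximal run is a maximal contiguous (possibly empty between two light edges) block of heavy edges along the path; equivalently, the path alternates between blocks of consecutive heavy edges and single light edges, with at most 2·⌊log₂ π(r,W)⌋ light edges separating at most 1 + 2·⌊log₂ π(r,W)⌋ heavy blocks. -/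
open scoped Classical

/-!
Appending an edge `(u, v)` to the paths from `r` to `u`, or prepending it to the paths from `v`
to `W`, shows that `π(r, ·)` never decreases and `π(·, W)` never increases along an edge
(acyclicity makes all path sets finite, so `ncard` counts them honestly). Hence along a path the
two coordinates of `λ` are monotone in opposite directions and each light edge strictly moves one
of them. On a path from `r` to `w ∈ W` the first coordinate ends at `⌊log₂ π(r,w)⌋ ≤ ⌊log₂ π(r,W)⌋`
and the second starts at `⌊log₂ π(r,W)⌋`, which leaves room for at most `2 ⌊log₂ π(r,W)⌋` light
edges.
-/

namespace List

variable {V : Type*} {E : V → V → Prop}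

theorem IsChain.nodup_of_acyclic (hacyc : ∀ v, ¬ Relation.TransGen E v v) {l : List V}
    (hl : l.IsChain E) : l.Nodup :=
  have : Std.Irrefl (Relation.TransGen E) := ⟨hacyc⟩
  (hl.imp fun _ _ => Relation.TransGen.single).pairwise.nodup

theorem IsChain.countP_zip_tail_add_le {f g : V → ℕ} {p : V × V → Bool}
    (hf : ∀ u v, E u v → f u ≤ f v) (hg : ∀ u v, E u v → g v ≤ g u)
    (hp : ∀ u v, E u v → p (u, v) → (f u, g u) ≠ (f v, g v))
    {l : List V} (hl : l.IsChain E) {a b : V} (ha : l.head? = some a) (hb : l.getLast? = some b) :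
    (l.zip l.tail).countP p + f a + g b ≤ f b + g a := by
  induction hl generalizing a with
  | nil => simp at ha
  | singleton c =>
    obtain rfl : c = a := by simpa using ha
    obtain rfl : c = b := by simpa using hb
    simp
  | @cons_cons c d l hcd _ ih =>
    obtain rfl : c = a := by simpa using ha
    have ih := ih rfl (by simpa [getLast?_cons_cons] using hb)
    have hfcd := hf c d hcd
    have hgcd := hg c d hcd
    have hstrict : p (c, d) → f c + g d < f d + g c := fun h => by
      have := hp c d hcd h
      simp only [ne_eq, Prod.mk.injEq] at this
      omega
    simp only [tail_cons, zip_cons_cons, countP_cons] at ih ⊢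
    split_ifs with hcd'
    · have := hstrict hcd'
      omega
    · omega

end List

section PathCount

variable {V : Type*} [Fintype V] {E : V → V → Prop}

theorem setOf_isDagPath_finite (hacyc : ∀ v, ¬ Relation.TransGen E v v) (u v : V) :
    {l : List V | IsDagPath E u v l}.Finite :=
  (List.finite_length_le V (Fintype.card V)).subset fun _ hl =>
    (hl.1.nodup_of_acyclic hacyc).length_le_card

theorem pathCount_le_pathCount_of_edge_right (hacyc : ∀ v, ¬ Relation.TransGen E v v) (a : V)
    {u v : V} (huv : E u v) : pathCount E a u ≤ pathCount E a v := by
  refine Set.ncard_le_ncard_of_injOn (· ++ [v]) ?_ (List.append_left_injective [v]).injOn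
    (setOf_isDagPath_finite hacyc a v)
  rintro l ⟨hl, ha, hu⟩
  refine ⟨hl.append (.singleton v) ?_, ?_, by simp⟩
  · simpa [hu] using huv
  · cases l <;> simp_all

theorem pathCount_le_pathCount_of_edge_left (hacyc : ∀ v, ¬ Relation.TransGen E v v) (b : V)
    {u v : V} (huv : E u v) : pathCount E v b ≤ pathCount E u b := by
  refine Set.ncard_le_ncard_of_injOn (u :: ·) ?_ List.cons_injective.injOn
    (setOf_isDagPath_finite hacyc u b)
  rintro l ⟨hl, hv, hb⟩
  refine ⟨hl.cons (by simpa [hv] using huv), rfl, ?_⟩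
  cases l <;> simp_all

theorem pathCountTo_le_pathCountTo_of_edge (hacyc : ∀ v, ¬ Relation.TransGen E v v)
    (W : Finset V) {u v : V} (huv : E u v) : pathCountTo E v W ≤ pathCountTo E u W :=
  Finset.sum_le_sum fun w _ => pathCount_le_pathCount_of_edge_left hacyc w huv

theorem lightEdgeCount_add_le (hacyc : ∀ v, ¬ Relation.TransGen E v v) (r : V) (W : Finset V)
    {a b : V} {l : List V} (hl : IsDagPath E a b l) :
    lightEdgeCount E r W l + Nat.log 2 (pathCount E r a) + Nat.log 2 (pathCountTo E b W)
      ≤ Nat.log 2 (pathCount E r b) + Nat.log 2 (pathCountTo E a W) :=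
  hl.1.countP_zip_tail_add_le
    (fun _ _ huv => Nat.log_mono_right (pathCount_le_pathCount_of_edge_right hacyc r huv))
    (fun _ _ huv => Nat.log_mono_right (pathCountTo_le_pathCountTo_of_edge hacyc W huv))
    (fun _ _ _ hlight => (of_decide_eq_true hlight).2) hl.2.1 hl.2.2

end PathCount

theorem symCPD_heavy_blocks_on_path_le_general
    {V : Type*} [Fintype V] (E : V → V → Prop) (r : V) (W : Finset V)
    (hacyc : ∀ v : V, ¬ Relation.TransGen E v v) :
    ∀ l : List V, l.Chain' E → l.head? = some r → (∃ w ∈ W, l.getLast? = some w) →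
      lightEdgeCount E r W l + 1 ≤ 1 + 2 * Nat.log 2 (pathCountTo E r W) := by
  rintro l hl hr ⟨w, hw, hlast⟩
  have hcount := lightEdgeCount_add_le hacyc r W ⟨hl, hr, hlast⟩
  have hrw : Nat.log 2 (pathCount E r w) ≤ Nat.log 2 (pathCountTo E r W) :=
    Nat.log_mono_right (Finset.single_le_sum (fun _ _ => Nat.zero_le _) hw)
  omega

/-- every directed path from `r` to a vertex of `W` consists of at most
`1 + 2 * ⌊log₂ π(r,W)⌋` maximal (possibly empty) blocks of consecutive heavy edges;
equivalently, the blocks are separated by single light edges, so the number of blocks,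
which equals the number of light edges plus one, is at most `1 + 2 * ⌊log₂ π(r,W)⌋`. -/
theorem symCPD_heavy_blocks_on_path_le
    {V : Type*} [Fintype V] (E : V → V → Prop) (r : V) (W : Finset V)
    (hacyc : ∀ v : V, ¬ Relation.TransGen E v v)
    (hr_src : ∀ u : V, ¬ E u r)
    (hr_uniq : ∀ v : V, (∀ u : V, ¬ E u v) → v = r)
    (hW : ∀ v : V, v ∈ W ↔ ∀ u : V, ¬ E v u)
    (hcov : ∀ v : V, Relation.ReflTransGen E r v ∧ ∃ w ∈ W, Relation.ReflTransGen E v w) :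
    ∀ l : List V, l.Chain' E → l.head? = some r → (∃ w ∈ W, l.getLast? = some w) →
      lightEdgeCount E r W l + 1 ≤ 1 + 2 * Nat.log 2 (pathCountTo E r W) :=
  symCPD_heavy_blocks_on_path_le_general E r W hacyc
end
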